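/- arXiv:math/0312505 — 2 statements merged into one kernel-verified Lean document; each statement's English description precedes it below -/
import Mathlib

section
/- Assume the α_i are pairwise distinct and fix a monomial term order ⪯ on k[z_1,…,z_n]. For an interval [x,y] in Λ, totally order the saturated chains of [x,y] by: F < G iff the content of F strictly ⪯-precedes the content of G, or the contents are equal and the label sequence of F is lexicographically smaller than that of G (individual labels compared by ⪯). Then this ordering satisfies the crossing condition: for all saturated chains F = (x = μ_0 ⋖ μ_1 ⋖ ⋯ ⋖ μ_r = y) and G of [x,y] with G < F, if the set of ranks {t ∈ {0,…,r} : μ_t ∉ G} is not a set of consecutive integers, then there exists a saturated chain G′ of [x,y] with G′ < F and (F ∩ G) ⊊ (F ∩ G′), where intersections are taken as sets of poset elements. -/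
open scoped Classical

noncomputable section

namespace ASG

variable {e n : ℕ}

/-- Ambient monoid `ℕ^e`. -/
abbrev M (e : ℕ) : Type := Fin e →₀ ℕ

/-- The affine semigroup `Λ` generated by `α 1, …, α n`. -/
def sg (α : Fin n → M e) : AddSubmonoid (M e) :=
  AddSubmonoid.closure (Set.range α)

/-- The partial order on `Λ` : `μ ≤ ν` iff `ν - μ ∈ Λ`. -/
def sgLE (α : Fin n → M e) (μ ν : M e) : Prop := ∃ δ ∈ sg α, μ + δ = ν

/-- Strict version of the order on `Λ`. -/
def sgLT (α : Fin n → M e) (μ ν : M e) : Prop := sgLE α μ ν ∧ μ ≠ ν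

/-- `deg λ` : the least `r` such that `λ` is a sum of `r` generators. -/
def deg (α : Fin n → M e) (l : M e) : ℕ :=
  sInf {r : ℕ | ∃ w : Fin r → Fin n, l = ∑ t, α (w t)}

/-- Comparability in the poset `Λ`. -/
def cmp2 (α : Fin n → M e) (a b : M e) : Prop := sgLE α a b ∨ sgLE α b a

/-- Faces of the order complex `Δ(x,y)` of the open interval `(x,y)` in `Λ`:
finite chains of elements strictly between `x` and `y`. -/
def IsOFace (α : Fin n → M e) (x y : M e) (S : Finset (M e)) : Prop :=
  (∀ μ ∈ S, μ ∈ sg α ∧ sgLT α x μ ∧ sgLT α μ y) ∧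
    (S : Set (M e)).Pairwise (cmp2 α)

/-- Faces with `m` vertices (i.e. of dimension `m - 1`). -/
def OFace (α : Fin n → M e) (x y : M e) (m : ℕ) : Type :=
  { S : Finset (M e) // IsOFace α x y S ∧ S.card = m }

/-- The simplicial chain group with coefficients in `K` spanned by the faces
with `m` vertices (the augmented/reduced chain complex: for `m = 0` this is a
copy of `K` spanned by the empty face). -/
abbrev OC (K : Type) [Field K] (α : Fin n → M e) (x y : M e) (m : ℕ) : Type :=
  OFace α x y m →₀ K

/-- Deleting a vertex from a face. -/
def erasedOFace {α : Fin n → M e} {x y : M e} {m : ℕ} (S : OFace α x y m)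
    (v : M e) (hv : v ∈ S.1) : OFace α x y (m - 1) :=
  ⟨S.1.erase v,
    ⟨fun μ hμ => S.2.1.1 μ (Finset.mem_of_mem_erase hμ),
      S.2.1.2.mono (Finset.coe_subset.mpr (Finset.erase_subset _ _))⟩,
    by rw [Finset.card_erase_of_mem hv, S.2.2]⟩

/-- The simplicial boundary map of the (augmented) chain complex of `Δ(x,y)`;
the sign of the deletion of a vertex `v` is `(-1)^(number of vertices below v)`. -/
def obd (K : Type) [Field K] (α : Fin n → M e) (x y : M e) (m : ℕ) :
    OC K α x y m →ₗ[K] OC K α x y (m - 1) :=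
  Finsupp.linearCombination K fun S : OFace α x y m =>
    ∑ v ∈ S.1.attach,
      ((-1 : K) ^ (S.1.filter fun w => sgLT α w v.1).card) •
        Finsupp.single (erasedOFace S v.1 v.2) 1

/-- Vanishing of the reduced simplicial homology `H̃_i(Δ(x,y); K)`, for `i : ℤ`:
every reduced `i`-cycle is a boundary.  (An `i`-dimensional face has `i + 1`
vertices; for `i ≤ -2` the statement is vacuous, as is the reduced homology.) -/
def HredVanishes (K : Type) [Field K] (α : Fin n → M e) (x y : M e) (i : ℤ) : Prop :=
  ∀ m : ℕ, (m : ℤ) = i + 1 →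
    ∀ c : OC K α x y m, obd K α x y m c = 0 →
      ∃ b : OC K α x y (m + 1), obd K α x y (m + 1) b = c

/-- The reduced simplicial homology group `H̃_(m-1)(Δ(x,y); K)` :
cycles in the chain group spanned by faces with `m` vertices modulo boundaries,
realized as the image of the cycles in the cokernel of the boundary map. -/
abbrev HredMod (K : Type) [Field K] (α : Fin n → M e) (x y : M e) (m : ℕ) : Type :=
  ↥(Submodule.map (Submodule.mkQ (LinearMap.range (obd K α x y (m + 1))))
      (LinearMap.ker (obd K α x y m)))

end ASG
namespace ASG

variable {e n : ℕ}

/-- The toric ideal `I_Λ = ker φ ⊆ k[z_1, …, z_n]`, where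
`φ(z_i) = x^(α i) ∈ k[Λ] ⊆ k[x_1, …, x_e]`. -/
def toricIdeal (k : Type) [Field k] (α : Fin n → M e) : Ideal (MvPolynomial (Fin n) k) :=
  RingHom.ker (MvPolynomial.aeval (R := k)
    fun i : Fin n => (MvPolynomial.monomial (α i) 1 : MvPolynomial (Fin e) k))

/-- A monomial term order on `k[z_1, …, z_n]` (monomials identified with their
exponent vectors in `ℕ^n`): a linear order such that `1` is least and which is
compatible with multiplication of monomials. -/
def IsTermOrder (ord : LinearOrder (Fin n →₀ ℕ)) : Prop :=
  (∀ a, ord.le 0 a) ∧ ∀ a b c, ord.le a b → ord.le (a + c) (b + c)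

/-- The initial ideal `in_⪯(I_Λ)`: the ideal generated by the `⪯`-leading
monomials of the nonzero elements of `I_Λ`. -/
def initialIdeal (k : Type) [Field k] (ord : LinearOrder (Fin n →₀ ℕ)) (α : Fin n → M e) :
    Ideal (MvPolynomial (Fin n) k) :=
  Ideal.span {p | ∃ f ∈ toricIdeal k α, f ≠ 0 ∧ ∃ mo : Fin n →₀ ℕ,
    (mo ∈ f.support ∧ ∀ m' ∈ f.support, ord.le m' mo) ∧ p = MvPolynomial.monomial mo 1}

/-- `I_Λ` has a Gröbner basis of degree `d` with respect to `⪯` iff `in_⪯(I_Λ)`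
is generated by monomials of total degree at most `d`. -/
def HasGB (k : Type) [Field k] (ord : LinearOrder (Fin n →₀ ℕ)) (α : Fin n → M e)
    (d : ℕ) : Prop :=
  ∃ G : Set (Fin n →₀ ℕ), (∀ mo ∈ G, (mo.sum fun _ c => c) ≤ d) ∧
    Ideal.span ((fun mo => (MvPolynomial.monomial mo 1 : MvPolynomial (Fin n) k)) '' G)
      = initialIdeal k ord α

end ASG
namespace ASG

variable {e n : ℕ}

/-- A saturated chain `x = μ_0 ⋖ μ_1 ⋖ ⋯ ⋖ μ_r = y` of the interval `[x,y]` of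
`Λ`, together with its label sequence: `lab t` (for `1 ≤ t ≤ r`) is the index
of the generator `μ_t - μ_(t-1)`. -/
structure SatChain (α : Fin n → M e) (x y : M e) (r : ℕ) : Type where
  pt : ℕ → M e
  lab : ℕ → Fin n
  bot : pt 0 = x
  top : pt r = y
  mem : ∀ t, t ≤ r → pt t ∈ sg α
  step : ∀ t, t < r → pt t + α (lab (t + 1)) = pt (t + 1)
  cov : ∀ t, t < r → ∀ γ ∈ sg α, sgLT α (pt t) γ → sgLT α γ (pt (t + 1)) → False

/-- The monomial `z_i`, i.e. the exponent vector of a single variable. -/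
def lmon (i : Fin n) : Fin n →₀ ℕ := Finsupp.single i 1

/-- The content of a saturated chain: the commutative product of its labels. -/
def chContent {α : Fin n → M e} {x y : M e} {r : ℕ} (F : SatChain α x y r) :
    Fin n →₀ ℕ :=
  ∑ t ∈ Finset.Icc 1 r, lmon (F.lab t)

/-- The facet order: `G < F` iff the content of `G` strictly `⪯`-precedes that
of `F`, or the contents agree and the label sequence of `G` is
lexicographically smaller (labels compared via `⪯`). -/
def facetLT (ord : LinearOrder (Fin n →₀ ℕ)) {α : Fin n → M e} {x y : M e}
    {r' r : ℕ} (G : SatChain α x y r') (F : SatChain α x y r) : Prop :=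
  ord.lt (chContent G) (chContent F) ∨
    (chContent G = chContent F ∧ ∃ t, 1 ≤ t ∧ t ≤ r' ∧ t ≤ r ∧
      (∀ s, 1 ≤ s → s < t → G.lab s = F.lab s) ∧
      ord.lt (lmon (G.lab t)) (lmon (F.lab t)))

/-- The underlying set of poset elements of a saturated chain. -/
def chSet {α : Fin n → M e} {x y : M e} {r : ℕ} (F : SatChain α x y r) :
    Set (M e) :=
  {μ | ∃ t, t ≤ r ∧ F.pt t = μ}

/-- `{t, …, u}` is a skipped set of ranks of `F`: the chain obtained from `F`
by deleting `μ_t, …, μ_u` is contained in a saturated chain `G < F`. -/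
def Skipped (ord : LinearOrder (Fin n →₀ ℕ)) {α : Fin n → M e} {x y : M e}
    {r : ℕ} (F : SatChain α x y r) (t u : ℕ) : Prop :=
  ∃ (r' : ℕ) (G : SatChain α x y r'), facetLT ord G F ∧
    ∀ s, s ≤ r → (s < t ∨ u < s) → F.pt s ∈ chSet G

/-- `{t, …, u}` is a minimal skipped interval of the saturated chain `F`:
a nonempty set of consecutive ranks contained in `{1, …, r-1}` which is a
skipped set and is minimal under inclusion with this property. -/
def MSI (ord : LinearOrder (Fin n →₀ ℕ)) {α : Fin n → M e} {x y : M e}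
    {r : ℕ} (F : SatChain α x y r) (t u : ℕ) : Prop :=
  1 ≤ t ∧ t ≤ u ∧ u ≤ r - 1 ∧ Skipped ord F t u ∧
    ∀ t' u', t ≤ t' → t' ≤ u' → u' ≤ u → Skipped ord F t' u' → t' = t ∧ u' = u

end ASG

/-!
Let `F.pt t' = G.pt s` be a common element of `F` and `G < F` with elements of `F` outside `G`
on both sides. Exchanging the parts of `F` and `G` at this element gives the saturated chains
`G|≤s ++ F|≥t'` and `F|≤t' ++ G|≥s`, each of which meets `F` in strictly more elements than `G`
does; it remains to see that one of them precedes `F`. Split the contents as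
`c(G) = g₁ + g₂ ⪯ c(F) = f₁ + f₂` at the common element. If `g₁ ≠ f₁`, then `g₁ + f₂ ≺ f₁ + f₂` or
`f₁ + g₂ ≺ f₁ + f₂`, since `⪯` is compatible with addition. If `g₁ = f₁`, then `s = t'` by
comparing degrees; now `F|≤s ++ G|≥s` has the content of `G`, while `G|≤s ++ F|≥s` has the
content of `F` and is lexicographically smaller than `F`, because `G` departs from `F` before
rank `s` (otherwise `G` would contain the element of `F` below `F.pt t'` that it misses).
-/

namespace ASG

theorem inter_ssubset_inter_of_mem {β : Type*} {A B C : Set β} (hBC : A ∩ B ⊆ C) {a : β}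
    (haA : a ∈ A) (haC : a ∈ C) (haB : a ∉ B) : A ∩ B ⊂ A ∩ C :=
  (Set.ssubset_iff_of_subset (Set.subset_inter Set.inter_subset_left hBC)).mpr
    ⟨a, ⟨haA, haC⟩, fun h => haB h.2⟩

theorem lt_or_lt_of_add_le_add_of_ne {β : Type*} [AddCommMonoid β] [LinearOrder β]
    [IsOrderedCancelAddMonoid β] {a b a' b' : β} (h : a' + b' ≤ a + b) (hne : a' ≠ a) :
    a' + b < a + b ∨ a + b' < a + b := by
  rcases hne.lt_or_gt with ha | ha
  · exact .inl (by gcongr)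
  · have hb : b' < b := (le_or_lt_of_add_le_add h).resolve_left ha.not_ge
    exact .inr (by gcongr)

variable {e n : ℕ}

-- `Fin n →₀ ℕ` already carries the pointwise order, so the term order is passed explicitly.
theorem IsTermOrder.isOrderedCancelAddMonoid {ord : LinearOrder (Fin n →₀ ℕ)}
    (hord : IsTermOrder ord) : @IsOrderedCancelAddMonoid (Fin n →₀ ℕ) _ ord.toPreorder :=
  @IsOrderedCancelAddMonoid.of_add_lt_add_left _ _ ord fun a b c hbc =>
    @lt_of_le_of_ne _ ord.toPartialOrder _ _
      (by simpa only [add_comm a] using hord.2 b c a (@le_of_lt _ ord.toPreorder _ _ hbc))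
      fun h => @ne_of_lt _ ord.toPreorder _ _ hbc (add_left_cancel h)

theorem facetLT.chContent_le {ord : LinearOrder (Fin n →₀ ℕ)} {α : Fin n → M e} {x y : M e}
    {r' r : ℕ} {G : SatChain α x y r'} {F : SatChain α x y r} (h : facetLT ord G F) :
    ord.le (chContent G) (chContent F) := by
  rcases h with h | ⟨h, -⟩
  exacts [@le_of_lt _ ord.toPreorder _ _ h, h ▸ ord.le_refl _]

namespace SatChain

variable {α : Fin n → M e} {x y : M e} {r r' : ℕ}

theorem degree_pt_strictMonoOn (hα : ∀ i, α i ≠ 0) (F : SatChain α x y r) :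
    StrictMonoOn (fun k => (F.pt k).degree) (Set.Iic r) :=
  strictMonoOn_Iic_of_lt_succ fun k hk => by
    have hpos : 0 < (α (F.lab (k + 1))).degree :=
      Nat.pos_of_ne_zero fun h => hα _ ((Finsupp.degree_eq_zero_iff _).mp h)
    simp only [Order.succ_eq_add_one, ← F.step k hk, map_add]
    omega

theorem le_iff_le_of_pt_eq (hα : ∀ i, α i ≠ 0) (F : SatChain α x y r) (G : SatChain α x y r')
    {a t b s : ℕ} (ha : a ≤ r) (ht : t ≤ r) (hb : b ≤ r') (hs : s ≤ r')
    (hab : F.pt a = G.pt b) (hts : F.pt t = G.pt s) : a ≤ t ↔ b ≤ s := by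
  rw [← (F.degree_pt_strictMonoOn hα).le_iff_le ha ht,
    ← (G.degree_pt_strictMonoOn hα).le_iff_le hb hs, hab, hts]

theorem pt_eq_of_lab_eq (F : SatChain α x y r) (G : SatChain α x y r') {m : ℕ} (hm : m ≤ r)
    (hm' : m ≤ r') (h : ∀ q, 1 ≤ q → q ≤ m → G.lab q = F.lab q) {q : ℕ} (hq : q ≤ m) :
    G.pt q = F.pt q := by
  induction q with
  | zero => rw [F.bot, G.bot]
  | succ q ih =>
    rw [← F.step q (by omega), ← G.step q (by omega), ih (by omega), h (q + 1) (by omega) hq]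

theorem mem_chSet (F : SatChain α x y r) {k : ℕ} (hk : k ≤ r) : F.pt k ∈ chSet F :=
  ⟨k, hk, rfl⟩

def headContent (F : SatChain α x y r) (m : ℕ) : Fin n →₀ ℕ :=
  ∑ q ∈ Finset.Ioc 0 m, lmon (F.lab q)

def tailContent (F : SatChain α x y r) (m : ℕ) : Fin n →₀ ℕ :=
  ∑ q ∈ Finset.Ioc m r, lmon (F.lab q)

theorem chContent_eq_headContent_add_tailContent (F : SatChain α x y r) {m : ℕ} (hm : m ≤ r) :
    chContent F = F.headContent m + F.tailContent m := by
  rw [chContent, headContent, tailContent, Finset.sum_Ioc_consecutive _ (Nat.zero_le m) hm,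
    ← Finset.Icc_add_one_left_eq_Ioc, zero_add]

theorem degree_headContent (F : SatChain α x y r) (m : ℕ) : (F.headContent m).degree = m := by
  simp [headContent, lmon]

theorem ite_pt_eq_of_le {rA rB : ℕ} (A : SatChain α x y rA) (B : SatChain α x y rB) {s t k : ℕ}
    (h : A.pt s = B.pt t) (hk : s ≤ k) :
    (if k ≤ s then A.pt k else B.pt (k - s + t)) = B.pt (k - s + t) := by
  split_ifs with hks
  · obtain rfl : k = s := by omega
    simpa using h
  · rfl

def splice {rA rB : ℕ} (A : SatChain α x y rA) (B : SatChain α x y rB) (s t : ℕ)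
    (hs : s ≤ rA) (ht : t ≤ rB) (h : A.pt s = B.pt t) : SatChain α x y (s + (rB - t)) where
  pt k := if k ≤ s then A.pt k else B.pt (k - s + t)
  lab k := if k ≤ s then A.lab k else B.lab (k - s + t)
  bot := by simp [A.bot]
  top := by rw [ite_pt_eq_of_le A B h (by omega), show s + (rB - t) - s + t = rB by omega, B.top]
  mem k hk := by
    split_ifs
    exacts [A.mem k (by omega), B.mem _ (by omega)]
  step k hk := by
    rcases lt_or_ge k s with hks | hks
    · simpa only [if_pos hks.le, if_pos (Nat.succ_le_of_lt hks)] using A.step k (by omega)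
    · rw [ite_pt_eq_of_le A B h hks, ite_pt_eq_of_le A B h (by omega), if_neg (by omega),
        show k + 1 - s + t = k - s + t + 1 by omega]
      exact B.step _ (by omega)
  cov k hk γ hγ := by
    rcases lt_or_ge k s with hks | hks
    · simpa only [if_pos hks.le, if_pos (Nat.succ_le_of_lt hks)] using A.cov k (by omega) γ hγ
    · rw [ite_pt_eq_of_le A B h hks, ite_pt_eq_of_le A B h (by omega),
        show k + 1 - s + t = k - s + t + 1 by omega]
      exact B.cov _ (by omega) γ hγ

section splice

variable {rA rB : ℕ} (A : SatChain α x y rA) (B : SatChain α x y rB) {s t : ℕ}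
  (hs : s ≤ rA) (ht : t ≤ rB) (h : A.pt s = B.pt t)

theorem splice_lab (k : ℕ) :
    (splice A B s t hs ht h).lab k = if k ≤ s then A.lab k else B.lab (k - s + t) := rfl

theorem mem_chSet_splice_of_le {k : ℕ} (hk : k ≤ s) : A.pt k ∈ chSet (splice A B s t hs ht h) :=
  ⟨k, by omega, if_pos hk⟩

theorem mem_chSet_splice_of_ge {k : ℕ} (hk : t ≤ k) (hkr : k ≤ rB) :
    B.pt k ∈ chSet (splice A B s t hs ht h) :=
  ⟨k - t + s, by omega, by
    show (if k - t + s ≤ s then A.pt (k - t + s) else B.pt (k - t + s - s + t)) = B.pt k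
    rw [ite_pt_eq_of_le A B h (by omega), show k - t + s - s + t = k by omega]⟩

theorem inter_chSet_subset_chSet_splice (hα : ∀ i, α i ≠ 0) :
    chSet A ∩ chSet B ⊆ chSet (splice A B s t hs ht h) := by
  rintro _ ⟨⟨a, ha, rfl⟩, ⟨b, hb, hab⟩⟩
  by_cases has : a ≤ s
  · exact mem_chSet_splice_of_le A B hs ht h has
  · have htb : t ≤ b := by
      have := (le_iff_le_of_pt_eq hα A B ha hs hb ht hab.symm h).not
      omega
    rw [← hab]
    exact mem_chSet_splice_of_ge A B hs ht h htb hb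

theorem chContent_splice :
    chContent (splice A B s t hs ht h) = A.headContent s + B.tailContent t := by
  rw [chContent_eq_headContent_add_tailContent _ (Nat.le_add_right s _)]
  congr 1
  · refine Finset.sum_congr rfl fun q hq => ?_
    rw [splice_lab, if_pos (Finset.mem_Ioc.mp hq).2]
  · refine Finset.sum_nbij' (· - s + t) (· - t + s) ?_ ?_ ?_ ?_ ?_
    all_goals
      intro q hq
      simp only [Finset.mem_Ioc] at hq ⊢
    · omega
    · omega
    · omega
    · omega
    · rw [splice_lab, if_neg (by omega)]

end splice

end SatChain

open SatChain

variable {α : Fin n → M e} {x y : M e} {r r' : ℕ} {ord : LinearOrder (Fin n →₀ ℕ)}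
  {F : SatChain α x y r} {G : SatChain α x y r'}

theorem facetLT_splice_or_facetLT_splice_of_headContent_eq (hGF : facetLT ord G F) {s t : ℕ}
    (hs : s ≤ r') (hs' : s ≤ r) (h : G.pt s = F.pt s)
    (hhead : G.headContent s = F.headContent s) (hts : t ≤ s) (hFt : F.pt t ∉ chSet G) :
    facetLT ord (splice G F s s hs hs' h) F ∨ facetLT ord (splice F G s s hs' hs h.symm) F := by
  rcases hGF with hlt | ⟨-, p, hp, -, hpr, hagree, hplt⟩
  · refine .inr (.inl ?_)
    rwa [chContent_splice, ← hhead, ← chContent_eq_headContent_add_tailContent _ hs]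
  · have hps : p ≤ s := by
      by_contra! hsp
      exact hFt (pt_eq_of_lab_eq F G hs' hs (fun q hq hqs => hagree q hq (by omega)) hts ▸
        mem_chSet G (by omega))
    refine .inl (.inr ⟨?_, p, hp, by omega, hpr, fun q hq hqp => ?_, ?_⟩)
    · rw [chContent_splice, hhead, ← chContent_eq_headContent_add_tailContent _ hs']
    · rw [splice_lab, if_pos (by omega)]
      exact hagree q hq hqp
    · rwa [splice_lab, if_pos hps]

theorem facetLT_splice_or_facetLT_splice (hord : IsTermOrder ord)
    (hGF : facetLT ord G F) {s t' t : ℕ} (hs : s ≤ r') (ht' : t' ≤ r) (h : G.pt s = F.pt t')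
    (htt' : t ≤ t') (hFt : F.pt t ∉ chSet G) :
    facetLT ord (splice G F s t' hs ht' h) F ∨ facetLT ord (splice F G t' s ht' hs h.symm) F := by
  by_cases hhead : G.headContent s = F.headContent t'
  · obtain rfl : s = t' := by simpa only [degree_headContent] using congrArg Finsupp.degree hhead
    exact facetLT_splice_or_facetLT_splice_of_headContent_eq hGF hs ht' h hhead htt' hFt
  · have hle := hGF.chContent_le
    rw [chContent_eq_headContent_add_tailContent _ hs,
      chContent_eq_headContent_add_tailContent _ ht'] at hle
    rcases @lt_or_lt_of_add_le_add_of_ne _ _ ord hord.isOrderedCancelAddMonoid _ _ _ _ hle hhead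
      with hlt | hlt
    · refine .inl (.inl ?_)
      rwa [chContent_splice, chContent_eq_headContent_add_tailContent _ ht']
    · refine .inr (.inl ?_)
      rwa [chContent_splice, chContent_eq_headContent_add_tailContent _ ht']

end ASG
open ASG in
theorem content_lex_order_satisfies_crossing_condition_general
    (e n : ℕ) (α : Fin n → M e) (hα : ∀ i, α i ≠ 0)
    (ord : LinearOrder (Fin n →₀ ℕ)) (hord : IsTermOrder ord)
    (x y : M e)
    (r r' : ℕ) (F : SatChain α x y r) (G : SatChain α x y r')
    (hGF : facetLT ord G F)
    (hnc : ∃ t t' t'' : ℕ, t < t' ∧ t' < t'' ∧ t'' ≤ r ∧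
      F.pt t ∉ chSet G ∧ F.pt t' ∈ chSet G ∧ F.pt t'' ∉ chSet G) :
    ∃ (r'' : ℕ) (G' : SatChain α x y r''), facetLT ord G' F ∧
      (chSet F ∩ chSet G) ⊂ (chSet F ∩ chSet G') := by
  obtain ⟨t, t', t'', htt', ht't'', ht'', hFt, ⟨s, hs, h⟩, hFt''⟩ := hnc
  have ht' : t' ≤ r := by omega
  rcases facetLT_splice_or_facetLT_splice hord hGF hs ht' h htt'.le hFt with hlt | hlt
  · refine ⟨_, _, hlt, inter_ssubset_inter_of_mem ?_ (F.mem_chSet ht'')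
      (G.mem_chSet_splice_of_ge F hs ht' h ht't''.le ht'') hFt''⟩
    rw [Set.inter_comm]
    exact G.inter_chSet_subset_chSet_splice F hs ht' h hα
  · exact ⟨_, _, hlt, inter_ssubset_inter_of_mem (F.inter_chSet_subset_chSet_splice G ht' hs _ hα)
      (F.mem_chSet (by omega)) (F.mem_chSet_splice_of_le G ht' hs _ htt'.le) hFt⟩

open ASG in
/-- Assume the generators are pairwise distinct and fix a
monomial term order `⪯`.  Order the saturated chains of an interval `[x,y]` of
`Λ` by `⪯`-comparison of contents, refined lexicographically.  Then this
ordering satisfies the crossing condition: if `G < F` and the set of ranks of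
elements of `F` not lying on `G` is not a set of consecutive integers, then
there is a saturated chain `G' < F` with `F ∩ G ⊊ F ∩ G'`. -/
theorem content_lex_order_satisfies_crossing_condition
    (e n : ℕ) (α : Fin n → M e) (hα : ∀ i, α i ≠ 0) (hinj : Function.Injective α)
    (ord : LinearOrder (Fin n →₀ ℕ)) (hord : IsTermOrder ord)
    (x y : M e) (hx : x ∈ sg α) (hy : y ∈ sg α) (hxy : sgLE α x y)
    (r r' : ℕ) (F : SatChain α x y r) (G : SatChain α x y r')
    (hGF : facetLT ord G F)
    (hnc : ∃ t t' t'' : ℕ, t < t' ∧ t' < t'' ∧ t'' ≤ r ∧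
      F.pt t ∉ chSet G ∧ F.pt t' ∈ chSet G ∧ F.pt t'' ∉ chSet G) :
    ∃ (r'' : ℕ) (G' : SatChain α x y r''), facetLT ord G' F ∧
      (chSet F ∩ chSet G) ⊂ (chSet F ∩ chSet G') :=
  content_lex_order_satisfies_crossing_condition_general e n α hα ord hord x y r r' F G hGF hnc
end
end

section
/- Let d ≥ 2 with d = 2 or d odd. Let Λ ⊆ ℕ^{2d} be the submonoid generated by the 2d vectors β_i = e_{2i−1} + e_{2i} for 1 ≤ i ≤ d and γ_j = e_j + e_{d+j} for 1 ≤ j ≤ d, where e_1, …, e_{2d} is the standard basis of ℕ^{2d}, and order Λ by μ ≤ λ iff λ − μ ∈ Λ. Let 𝟙 = (1,1,…,1) = β_1 + ⋯ + β_d ∈ Λ. Then deg(𝟙) = d, and the open interval (0,𝟙) = {μ ∈ Λ : 0 < μ < 𝟙} is nonempty and disconnected: it equals the disjoint union A ⊔ B, where A is the set of sums of nonempty proper subsets of {β_1,…,β_d} and B is the set of sums of nonempty proper subsets of {γ_1,…,γ_d}, and no element of A is comparable to any element of B. Consequently H̃_0(Δ(0,𝟙); K) ≠ 0 for every field K. 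-/
open scoped Classical

noncomputable section

namespace ASG

/-- The generator `β_i = e_(2i-1) + e_(2i)` (1-indexed), for `i ∈ Fin d`. -/
def bgen (d : ℕ) (i : Fin d) : M (2 * d) :=
  Finsupp.single ⟨2 * i.1, by have := i.isLt; omega⟩ 1 +
    Finsupp.single ⟨2 * i.1 + 1, by have := i.isLt; omega⟩ 1

/-- The generator `γ_j = e_j + e_(d+j)` (1-indexed), for `j ∈ Fin d`. -/
def ggen (d : ℕ) (j : Fin d) : M (2 * d) :=
  Finsupp.single ⟨j.1, by have := j.isLt; omega⟩ 1 +
    Finsupp.single ⟨d + j.1, by have := j.isLt; omega⟩ 1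

/-- The `2d` generators `β_1, …, β_d, γ_1, …, γ_d` of `Λ ⊆ ℕ^(2d)`. -/
def bggen (d : ℕ) : Fin (2 * d) → M (2 * d) := fun i =>
  if h : i.1 < d then bgen d ⟨i.1, h⟩ else ggen d ⟨i.1 - d, by have := i.isLt; omega⟩

/-- The all-ones vector `𝟙 = (1, 1, …, 1) ∈ ℕ^(2d)`. -/
def allOne (d : ℕ) : M (2 * d) := ∑ j : Fin (2 * d), Finsupp.single j 1

/-- `A`: sums of nonempty proper subsets of `{β_1, …, β_d}`. -/
def setA (d : ℕ) : Set (M (2 * d)) :=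
  {μ | ∃ s : Finset (Fin d), s.Nonempty ∧ s ≠ Finset.univ ∧ μ = ∑ i ∈ s, bgen d i}

/-- `B`: sums of nonempty proper subsets of `{γ_1, …, γ_d}`. -/
def setB (d : ℕ) : Set (M (2 * d)) :=
  {μ | ∃ s : Finset (Fin d), s.Nonempty ∧ s ≠ Finset.univ ∧ μ = ∑ j ∈ s, ggen d j}

end ASG

/-!
Write an element of `Λ` as `∑ aᵢ βᵢ + ∑ bⱼ γⱼ`; its `k`-th coordinate is `a_⌊k/2⌋ + b_(k mod d)`.
When `d = 2` or `d` is odd, the bipartite graph joining `⌊k/2⌋` to `k mod d` for every coordinate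
`k` is connected, so in a factorization of `𝟙` the coefficients `a` are constant: the only
factorizations of `𝟙` are `∑ βᵢ` and `∑ γⱼ`. Hence everything below `𝟙` is a subset sum of the
`βᵢ` or of the `γⱼ`, and a `β`-sum comparable with a `γ`-sum would give a factorization of `𝟙`
using both kinds of generators. Finally, for `a ∈ A` and `b ∈ B` the cycle `[a] - [b]` is not a
boundary, because the `0`-cochain counting the vertices in `A` is constant along edges.
-/

namespace ASG

section Poset

variable {e n : ℕ} {α : Fin n → M e}

lemma sgLE_refl (μ : M e) : sgLE α μ μ :=
  ⟨0, zero_mem _, add_zero μ⟩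

lemma sgLE_antisymm {μ ν : M e} (h₁ : sgLE α μ ν) (h₂ : sgLE α ν μ) : μ = ν := by
  obtain ⟨p, -, rfl⟩ := h₁
  obtain ⟨q, -, hq⟩ := h₂
  have hpq : p + q = 0 := by
    rw [add_assoc] at hq
    exact add_eq_left.1 hq
  rw [(add_eq_zero.1 hpq).1, add_zero]

lemma sgLT_irrefl (μ : M e) : ¬ sgLT α μ μ :=
  fun h => h.2 rfl

lemma cmp2_refl (μ : M e) : cmp2 α μ μ :=
  Or.inl (sgLE_refl μ)

lemma cmp2_comm {μ ν : M e} : cmp2 α μ ν ↔ cmp2 α ν μ :=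
  or_comm

def openInterval (α : Fin n → M e) (x y : M e) : Set (M e) :=
  {μ | μ ∈ sg α ∧ sgLT α x μ ∧ sgLT α μ y}

lemma sum_mem_openInterval {ι : Type*} [Fintype ι] {f : ι → M e} (hf : ∀ i, f i ∈ sg α)
    (hinj : Function.Injective fun s : Finset ι => ∑ i ∈ s, f i) {s : Finset ι}
    (hs : s.Nonempty) (hs' : s ≠ Finset.univ) :
    ∑ i ∈ s, f i ∈ openInterval α 0 (∑ i, f i) := by
  have hmem : ∀ t : Finset ι, ∑ i ∈ t, f i ∈ sg α := fun t => sum_mem fun i _ => hf i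
  refine ⟨hmem s, ⟨⟨_, hmem s, zero_add _⟩, fun h => hs.ne_empty (hinj ?_)⟩,
    ⟨⟨_, hmem sᶜ, Finset.sum_add_sum_compl s f⟩, fun h => hs' (hinj h)⟩⟩
  simpa using h.symm

lemma deg_eq_of_degree_eq {c r : ℕ} (hc : c ≠ 0) (hα : ∀ t, (α t).degree = c) {l : M e}
    (hl : ∃ w : Fin r → Fin n, l = ∑ t, α (w t)) : deg α l = r := by
  have hlen : ∀ r' (w : Fin r' → Fin n), l = ∑ t, α (w t) → l.degree = r' * c := by
    rintro r' w rfl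
    simp [map_sum, hα]
  have hset : {r' : ℕ | ∃ w : Fin r' → Fin n, l = ∑ t, α (w t)} = {r} := by
    ext r'
    refine ⟨fun ⟨w', hw'⟩ => ?_, fun h => h ▸ hl⟩
    obtain ⟨w, hw⟩ := hl
    exact Nat.eq_of_mul_eq_mul_right (Nat.pos_of_ne_zero hc)
      ((hlen r' w' hw').symm.trans (hlen r w hw))
  rw [deg, hset, csInf_singleton]

end Poset

section OrderComplex

variable {K : Type} [Field K] {e n : ℕ} {α : Fin n → M e} {x y : M e}

instance : Subsingleton (OFace α x y 0) :=
  ⟨fun S T => Subtype.ext <| by rw [Finset.card_eq_zero.1 S.2.2, Finset.card_eq_zero.1 T.2.2]⟩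

@[simp]
lemma erasedOFace_val {m : ℕ} (S : OFace α x y m) (v : M e) (hv : v ∈ S.1) :
    (erasedOFace S v hv).1 = S.1.erase v :=
  rfl

lemma obd_one_single (S : OFace α x y 1) (E : OFace α x y 0) :
    obd K α x y 1 (Finsupp.single S 1) = Finsupp.single E 1 := by
  obtain ⟨μ, hμ⟩ := Finset.card_eq_one.1 S.2.2
  rw [obd, Finsupp.linearCombination_single, one_smul]
  simp_rw [Subsingleton.elim _ E]
  rw [Finset.sum_attach S.1 fun v => ((-1 : K) ^ (S.1.filter fun w => sgLT α w v).card) •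
    Finsupp.single E (1 : K), hμ, Finset.sum_singleton, Finset.filter_singleton,
    if_neg (sgLT_irrefl μ), Finset.card_empty, pow_zero, one_smul]

lemma neg_one_pow_card_filter_pair {u v : M e} (huv : sgLT α u v) :
    (-1 : K) ^ (({u, v} : Finset (M e)).filter fun w => sgLT α w u).card +
      (-1) ^ (({u, v} : Finset (M e)).filter fun w => sgLT α w v).card = 0 := by
  have hvu : ¬ sgLT α v u := fun h => huv.2 (sgLE_antisymm huv.1 h.1)
  rw [Finset.filter_insert, Finset.filter_insert, Finset.filter_singleton,
    Finset.filter_singleton, if_neg (sgLT_irrefl u), if_neg hvu, if_pos huv,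
    if_neg (sgLT_irrefl v)]
  simp

/-- A `0`-cochain that takes the same value on the two ends of every edge is a cocycle. -/
lemma linearCombination_obd_two_eq_zero {g : Finset (M e) → K}
    (hg : ∀ S : OFace α x y 2, ∀ u ∈ S.1, ∀ v ∈ S.1, g (S.1.erase u) = g (S.1.erase v))
    (b : OC K α x y 2) :
    Finsupp.linearCombination K (fun T : OFace α x y 1 => g T.1) (obd K α x y 2 b) = 0 := by
  induction b using Finsupp.induction_linear with
  | zero => simp
  | add b b' hb hb' => rw [map_add, map_add, hb, hb', add_zero]
  | single S c =>
    rw [← mul_one c, ← smul_eq_mul, ← Finsupp.smul_single, map_smul, map_smul]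
    obtain ⟨u, v, huv, hS⟩ := Finset.card_eq_two.1 S.2.2
    have hu : u ∈ S.1 := by simp [hS]
    have hv : v ∈ S.1 := by simp [hS]
    have hcmp : cmp2 α u v := S.2.1.2 hu hv huv
    simp only [obd, Finsupp.linearCombination_single, one_smul, map_sum, map_smul, smul_eq_mul,
      erasedOFace_val, one_mul]
    rw [Finset.sum_attach S.1 fun w => (-1 : K) ^ (S.1.filter fun w' => sgLT α w' w).card *
      g (S.1.erase w), hS, Finset.sum_pair huv, ← hS, hg S v hv u hu, ← add_mul, hS]
    rcases hcmp with h | h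
    · rw [neg_one_pow_card_filter_pair ⟨h, huv⟩, zero_mul, mul_zero]
    · rw [add_comm, Finset.pair_comm, neg_one_pow_card_filter_pair ⟨h, huv.symm⟩, zero_mul,
        mul_zero]

theorem not_hredVanishes_zero_of_cochain {g : Finset (M e) → K}
    (hg : ∀ S : OFace α x y 2, ∀ u ∈ S.1, ∀ v ∈ S.1, g (S.1.erase u) = g (S.1.erase v))
    (S T : OFace α x y 1) (hST : g S.1 ≠ g T.1) : ¬ HredVanishes K α x y 0 := by
  intro H
  obtain ⟨μ, hμ⟩ := Finset.card_eq_one.1 S.2.2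
  let E := erasedOFace S μ (by simp [hμ])
  have hcycle : obd K α x y 1 (Finsupp.single S 1 - Finsupp.single T 1) = 0 := by
    rw [map_sub, obd_one_single S E, obd_one_single T E, sub_self]
  obtain ⟨b, hb⟩ := H 1 (by norm_num) _ hcycle
  have := congrArg (Finsupp.linearCombination K fun T : OFace α x y 1 => g T.1) hb
  rw [linearCombination_obd_two_eq_zero hg b, map_sub, Finsupp.linearCombination_single,
    Finsupp.linearCombination_single, one_smul, one_smul] at this
  exact hST (sub_eq_zero.1 this.symm)

def singletonOFace {μ : M e} (hμ : μ ∈ openInterval α x y) : OFace α x y 1 :=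
  ⟨{μ}, ⟨fun ν hν => Finset.mem_singleton.1 hν ▸ hμ, by simp⟩, Finset.card_singleton μ⟩

theorem not_hredVanishes_zero_of_separated {A B : Set (M e)}
    (hAB : openInterval α x y = A ∪ B) (hinc : ∀ a ∈ A, ∀ b ∈ B, ¬ cmp2 α a b)
    {a b : M e} (ha : a ∈ A) (hb : b ∈ B) : ¬ HredVanishes K α x y 0 := by
  have hsep : ∀ u ∈ openInterval α x y, ∀ v ∈ openInterval α x y,
      cmp2 α u v → (u ∈ A ↔ v ∈ A) := by
    intro u hu v hv huv
    rw [hAB] at hu hv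
    rcases hu with hu | hu <;> rcases hv with hv | hv
    · exact iff_of_true hu hv
    · exact absurd huv (hinc u hu v hv)
    · exact absurd (cmp2_comm.1 huv) (hinc v hv u hu)
    · exact iff_of_false (fun h => hinc u h u hu (cmp2_refl u))
        (fun h => hinc v h v hv (cmp2_refl v))
  let g : Finset (M e) → K := fun T => ∑ μ ∈ T, if μ ∈ A then 1 else 0
  have hg : ∀ S : OFace α x y 2, ∀ u ∈ S.1, ∀ v ∈ S.1, g (S.1.erase u) = g (S.1.erase v) := by
    intro S u hu v hv
    have hcmp : cmp2 α u v := by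
      rcases eq_or_ne u v with rfl | huv
      · exact cmp2_refl u
      · exact S.2.1.2 hu hv huv
    simp only [g, Finset.sum_erase_eq_sub hu, Finset.sum_erase_eq_sub hv,
      if_congr (hsep u (S.2.1.1 u hu) v (S.2.1.1 v hv) hcmp) rfl rfl]
  have haI : a ∈ openInterval α x y := hAB ▸ Or.inl ha
  have hbI : b ∈ openInterval α x y := hAB ▸ Or.inr hb
  have hbA : b ∉ A := fun h => hinc b h b hb (cmp2_refl b)
  refine not_hredVanishes_zero_of_cochain hg (singletonOFace haI) (singletonOFace hbI) ?_
  simp only [g, singletonOFace, Finset.sum_singleton, if_pos ha, if_neg hbA]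
  exact one_ne_zero

end OrderComplex

section Example

variable {d : ℕ}

def bIdx (k : Fin (2 * d)) : Fin d := ⟨k / 2, Nat.div_lt_of_lt_mul k.isLt⟩

def gIdx (k : Fin (2 * d)) : Fin d := ⟨k % d, Nat.mod_lt _ (by have := k.isLt; omega)⟩

lemma bIdx_surjective : Function.Surjective (bIdx (d := d)) :=
  fun i => ⟨⟨2 * i, by omega⟩, Fin.ext (by simp [bIdx])⟩

lemma gIdx_surjective : Function.Surjective (gIdx (d := d)) :=
  fun j => ⟨⟨j, by omega⟩, Fin.ext (by simp [gIdx, Nat.mod_eq_of_lt j.isLt])⟩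

/-- For `d = 2m + 1` the coordinates `j` and `d + j` link `j / 2` to `m + (j + 1) / 2`;
thus `i ≤ m` is linked to `i - 1` through `m + i`, and `i > m` is linked to `i - m`. -/
lemma apply_eq_apply_zero_of_div_two {X : Type*} (hdo : d = 2 ∨ Odd d) {G : ℕ → X}
    (hG : ∀ j < d, G (j / 2) = G ((d + j) / 2)) : ∀ i < d, G i = G 0 := by
  rcases hdo with rfl | ⟨m, rfl⟩
  · intro i hi
    interval_cases i
    · rfl
    · exact (hG 0 (by omega)).symm
  · intro i
    induction i using Nat.strong_induction_on with
    | _ i ih =>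
      intro hi
      rcases Nat.eq_zero_or_pos i with rfl | hi0
      · rfl
      rcases le_or_gt i m with him | him
      · have h₁ := hG (2 * i) (by omega)
        have h₂ := hG (2 * (i - 1) + 1) (by omega)
        rw [show 2 * i / 2 = i by omega, show (2 * m + 1 + 2 * i) / 2 = m + i by omega] at h₁
        rw [show (2 * (i - 1) + 1) / 2 = i - 1 by omega,
          show (2 * m + 1 + (2 * (i - 1) + 1)) / 2 = m + i by omega] at h₂
        rw [h₁, ← h₂, ih (i - 1) (by omega) (by omega)]
      · have h₁ := hG (2 * (i - m)) (by omega)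
        rw [show 2 * (i - m) / 2 = i - m by omega,
          show (2 * m + 1 + 2 * (i - m)) / 2 = i by omega] at h₁
        rw [← h₁, ih (i - m) (by omega) (by omega)]

/-- The bipartite graph joining `bIdx k` and `gIdx k` for every coordinate `k` is connected. -/
lemma eq_of_gIdx_eq {X : Type*} (hdo : d = 2 ∨ Odd d) {F : Fin d → X}
    (hF : ∀ k k' : Fin (2 * d), gIdx k = gIdx k' → F (bIdx k) = F (bIdx k')) (i i' : Fin d) :
    F i = F i' := by
  have hd : 0 < d := i.pos
  let G : ℕ → X := fun m => F ⟨m % d, Nat.mod_lt _ hd⟩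
  have hGF : ∀ i : Fin d, G i = F i := fun i => congrArg F (Fin.ext (Nat.mod_eq_of_lt i.isLt))
  have hG : ∀ j < d, G (j / 2) = G ((d + j) / 2) := by
    intro j hj
    have := hF ⟨j, by omega⟩ ⟨d + j, by omega⟩ (Fin.ext (by simp [gIdx]))
    simpa [G, bIdx, Nat.mod_eq_of_lt (show j / 2 < d by omega),
      Nat.mod_eq_of_lt (show (d + j) / 2 < d by omega)] using this
  rw [← hGF i, ← hGF i', apply_eq_apply_zero_of_div_two hdo hG i i.isLt,
    apply_eq_apply_zero_of_div_two hdo hG i' i'.isLt]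

lemma bgen_apply (i : Fin d) (k : Fin (2 * d)) : bgen d i k = if bIdx k = i then 1 else 0 := by
  simp only [bgen, Finsupp.add_apply, Finsupp.single_apply, Fin.ext_iff, bIdx]
  split_ifs <;> omega

lemma ggen_apply (j : Fin d) (k : Fin (2 * d)) : ggen d j k = if gIdx k = j then 1 else 0 := by
  have hk := k.isLt
  simp only [ggen, Finsupp.add_apply, Finsupp.single_apply, Fin.ext_iff, gIdx]
  rcases lt_or_ge k.1 d with h | h
  · rw [Nat.mod_eq_of_lt h]
    split_ifs <;> omega
  · rw [Nat.mod_eq_sub_mod h, Nat.mod_eq_of_lt (by omega)]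
    split_ifs <;> omega

lemma allOne_apply (k : Fin (2 * d)) : allOne d k = 1 := by
  simp [allOne, Finsupp.finsetSum_apply, Finsupp.single_apply]

def comb (a b : Fin d → ℕ) : M (2 * d) :=
  ∑ i, a i • bgen d i + ∑ j, b j • ggen d j

lemma comb_apply (a b : Fin d → ℕ) (k : Fin (2 * d)) :
    comb a b k = a (bIdx k) + b (gIdx k) := by
  simp [comb, bgen_apply, ggen_apply]

lemma comb_add (a b a' b' : Fin d → ℕ) : comb (a + a') (b + b') = comb a b + comb a' b' := by
  ext k
  simp only [comb_apply, Finsupp.add_apply, Pi.add_apply]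
  ring

lemma sum_bgen_eq_comb (s : Finset (Fin d)) :
    ∑ i ∈ s, bgen d i = comb (fun i => if i ∈ s then 1 else 0) 0 := by
  simp [comb, ite_smul, Finset.sum_ite_mem]

lemma sum_ggen_eq_comb (t : Finset (Fin d)) :
    ∑ j ∈ t, ggen d j = comb 0 (fun j => if j ∈ t then 1 else 0) := by
  simp [comb, ite_smul, Finset.sum_ite_mem]

lemma allOne_eq_sum_bgen : allOne d = ∑ i, bgen d i := by
  ext k
  simp [sum_bgen_eq_comb, comb_apply, allOne_apply]

lemma allOne_eq_sum_ggen : allOne d = ∑ j, ggen d j := by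
  ext k
  simp [sum_ggen_eq_comb, comb_apply, allOne_apply]

lemma comb_eq_allOne (hdo : d = 2 ∨ Odd d) {a b : Fin d → ℕ} (h : comb a b = allOne d) :
    (a = 1 ∧ b = 0) ∨ (a = 0 ∧ b = 1) := by
  have hk : ∀ k, a (bIdx k) + b (gIdx k) = 1 := fun k => by
    rw [← comb_apply, h, allOne_apply]
  have hconst : ∀ i i', a i = a i' := eq_of_gIdx_eq hdo fun k k' hkk' => by
    have := hk k
    have := hk k'
    rw [hkk'] at *
    omega
  by_cases ha : a = 0
  · refine Or.inr ⟨ha, funext fun j => ?_⟩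
    obtain ⟨k, rfl⟩ := gIdx_surjective j
    simpa [ha] using hk k
  · obtain ⟨i, hi⟩ := Function.ne_iff.1 ha
    have ha1 : a = 1 := funext fun i' => by
      obtain ⟨k, rfl⟩ := bIdx_surjective i
      have := hk k
      simp only [Pi.zero_apply] at hi
      rw [Pi.one_apply, ← hconst (bIdx k) i']
      omega
    refine Or.inl ⟨ha1, funext fun j => ?_⟩
    obtain ⟨k, rfl⟩ := gIdx_surjective j
    simpa [ha1] using hk k

lemma bggen_of_lt (i : Fin d) : bggen d ⟨i, by omega⟩ = bgen d i := by
  simp [bggen]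

lemma bggen_add (j : Fin d) : bggen d ⟨d + j, by omega⟩ = ggen d j := by
  simp [bggen]

lemma bgen_mem (i : Fin d) : bgen d i ∈ sg (bggen d) :=
  bggen_of_lt i ▸ AddSubmonoid.subset_closure (Set.mem_range_self _)

lemma ggen_mem (j : Fin d) : ggen d j ∈ sg (bggen d) :=
  bggen_add j ▸ AddSubmonoid.subset_closure (Set.mem_range_self _)

lemma exists_comb_eq {μ : M (2 * d)} (hμ : μ ∈ sg (bggen d)) : ∃ a b, comb a b = μ := by
  induction hμ using AddSubmonoid.closure_induction with
  | mem _ h =>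
    obtain ⟨t, rfl⟩ := h
    by_cases ht : t.1 < d
    · exact ⟨Pi.single ⟨t, ht⟩ 1, 0, by simp [comb, bggen, ht, Pi.single_apply, ite_smul]⟩
    · refine ⟨0, Pi.single ⟨t - d, by omega⟩ 1, ?_⟩
      simp [comb, bggen, ht, Pi.single_apply, ite_smul]
  | zero => exact ⟨0, 0, by simp [comb]⟩
  | add _ _ _ _ h h' =>
    obtain ⟨a, b, rfl⟩ := h
    obtain ⟨a', b', rfl⟩ := h'
    exact ⟨a + a', b + b', comb_add a b a' b'⟩

lemma sum_bgen_injective : Function.Injective fun s : Finset (Fin d) => ∑ i ∈ s, bgen d i := by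
  intro s s' h
  ext i
  obtain ⟨k, rfl⟩ := bIdx_surjective i
  have := DFunLike.congr_fun h k
  simp only [sum_bgen_eq_comb, comb_apply, Pi.zero_apply, add_zero] at this
  split_ifs at this <;> simp_all

lemma sum_ggen_injective : Function.Injective fun t : Finset (Fin d) => ∑ j ∈ t, ggen d j := by
  intro t t' h
  ext j
  obtain ⟨k, rfl⟩ := gIdx_surjective j
  have := DFunLike.congr_fun h k
  simp only [sum_ggen_eq_comb, comb_apply, Pi.zero_apply, zero_add] at this
  split_ifs at this <;> simp_all

lemma exists_indicator_of_add_eq_one {ι : Type*} [Fintype ι] [DecidableEq ι] {a a' : ι → ℕ}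
    (h : a + a' = 1) :
    ∃ s : Finset ι, a = fun i => if i ∈ s then 1 else 0 := by
  refine ⟨Finset.univ.filter (a · = 1), funext fun i => ?_⟩
  have := congr_fun h i
  simp only [Pi.add_apply, Pi.one_apply] at this
  simp only [Finset.mem_filter, Finset.mem_univ, true_and]
  split_ifs <;> omega

lemma eq_sum_bgen_or_eq_sum_ggen (hdo : d = 2 ∨ Odd d) {μ δ : M (2 * d)}
    (hμ : μ ∈ sg (bggen d)) (hδ : δ ∈ sg (bggen d)) (h : μ + δ = allOne d) :
    (∃ s, μ = ∑ i ∈ s, bgen d i) ∨ ∃ t, μ = ∑ j ∈ t, ggen d j := by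
  obtain ⟨a, b, rfl⟩ := exists_comb_eq hμ
  obtain ⟨a', b', rfl⟩ := exists_comb_eq hδ
  rw [← comb_add] at h
  rcases comb_eq_allOne hdo h with ⟨ha, hb⟩ | ⟨ha, hb⟩
  · obtain ⟨s, rfl⟩ := exists_indicator_of_add_eq_one ha
    exact Or.inl ⟨s, by rw [(add_eq_zero.1 hb).1, sum_bgen_eq_comb]⟩
  · obtain ⟨t, rfl⟩ := exists_indicator_of_add_eq_one hb
    exact Or.inr ⟨t, by rw [(add_eq_zero.1 ha).1, sum_ggen_eq_comb]⟩

lemma openInterval_eq (hdo : d = 2 ∨ Odd d) :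
    openInterval (bggen d) 0 (allOne d) = setA d ∪ setB d := by
  ext μ
  constructor
  · rintro ⟨hμ, ⟨-, h0⟩, ⟨⟨δ, hδ, hsum⟩, h1⟩⟩
    have hne : ∀ {s : Finset (Fin d)} {f : Fin d → M (2 * d)}, μ = ∑ i ∈ s, f i → s.Nonempty :=
      fun hs => Finset.nonempty_iff_ne_empty.2 fun h => h0 (by simp [hs, h])
    rcases eq_sum_bgen_or_eq_sum_ggen hdo hμ hδ hsum with ⟨s, hs⟩ | ⟨t, ht⟩
    · exact Or.inl ⟨s, hne hs, by rintro rfl; exact h1 (hs.trans allOne_eq_sum_bgen.symm), hs⟩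
    · exact Or.inr ⟨t, hne ht, by rintro rfl; exact h1 (ht.trans allOne_eq_sum_ggen.symm), ht⟩
  · rintro (⟨s, hs, hs', rfl⟩ | ⟨t, ht, ht', rfl⟩)
    · rw [allOne_eq_sum_bgen]
      exact sum_mem_openInterval bgen_mem sum_bgen_injective hs hs'
    · rw [allOne_eq_sum_ggen]
      exact sum_mem_openInterval ggen_mem sum_ggen_injective ht ht'

lemma not_sgLE_sum_bgen_sum_ggen (hdo : d = 2 ∨ Odd d) {s t : Finset (Fin d)}
    (hs : s.Nonempty) (ht : t ≠ Finset.univ) :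
    ¬ sgLE (bggen d) (∑ i ∈ s, bgen d i) (∑ j ∈ t, ggen d j) := by
  rintro ⟨δ, hδ, h⟩
  obtain ⟨c, e, rfl⟩ := exists_comb_eq hδ
  have key : comb ((fun i => if i ∈ s then 1 else 0) + c) (e + fun j => if j ∈ tᶜ then 1 else 0)
      = allOne d := by
    rw [allOne_eq_sum_ggen, ← Finset.sum_add_sum_compl t, ← h, sum_bgen_eq_comb,
      sum_ggen_eq_comb, ← comb_add, ← comb_add, add_zero, zero_add]
  obtain ⟨i, hi⟩ := hs
  obtain ⟨j, hj⟩ : ∃ j, j ∉ t := by simpa [Finset.eq_univ_iff_forall] using ht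
  rcases comb_eq_allOne hdo key with ⟨-, h0⟩ | ⟨h0, -⟩
  · simpa [hj] using congr_fun h0 j
  · simpa [hi] using congr_fun h0 i

lemma not_sgLE_sum_ggen_sum_bgen (hdo : d = 2 ∨ Odd d) {s t : Finset (Fin d)}
    (ht : t.Nonempty) (hs : s ≠ Finset.univ) :
    ¬ sgLE (bggen d) (∑ j ∈ t, ggen d j) (∑ i ∈ s, bgen d i) := by
  rintro ⟨δ, hδ, h⟩
  obtain ⟨c, e, rfl⟩ := exists_comb_eq hδ
  have key : comb (c + fun i => if i ∈ sᶜ then 1 else 0) ((fun j => if j ∈ t then 1 else 0) + e)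
      = allOne d := by
    rw [allOne_eq_sum_bgen, ← Finset.sum_add_sum_compl s, ← h, sum_ggen_eq_comb,
      sum_bgen_eq_comb, ← comb_add, ← comb_add, add_zero, zero_add]
  obtain ⟨j, hj⟩ := ht
  obtain ⟨i, hi⟩ : ∃ i, i ∉ s := by simpa [Finset.eq_univ_iff_forall] using hs
  rcases comb_eq_allOne hdo key with ⟨-, h0⟩ | ⟨h0, -⟩
  · simpa [hj] using congr_fun h0 j
  · simpa [hi] using congr_fun h0 i

lemma setA_setB_incomparable (hdo : d = 2 ∨ Odd d) :
    ∀ a ∈ setA d, ∀ b ∈ setB d, ¬ sgLE (bggen d) a b ∧ ¬ sgLE (bggen d) b a := by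
  rintro _ ⟨s, hs, hs', rfl⟩ _ ⟨t, ht, ht', rfl⟩
  exact ⟨not_sgLE_sum_bgen_sum_ggen hdo hs ht', not_sgLE_sum_ggen_sum_bgen hdo ht hs'⟩

lemma setA_inter_setB (hdo : d = 2 ∨ Odd d) : setA d ∩ setB d = ∅ :=
  Set.eq_empty_of_forall_notMem fun μ ⟨hA, hB⟩ =>
    (setA_setB_incomparable hdo μ hA μ hB).1 (sgLE_refl μ)

lemma bgen_zero_mem_setA (hd : 2 ≤ d) : bgen d ⟨0, by omega⟩ ∈ setA d := by
  have := Fin.nontrivial_iff_two_le.2 hd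
  refine ⟨{⟨0, by omega⟩}, Finset.singleton_nonempty _, Finset.singleton_ne_univ _, ?_⟩
  rw [Finset.sum_singleton]

lemma ggen_zero_mem_setB (hd : 2 ≤ d) : ggen d ⟨0, by omega⟩ ∈ setB d := by
  have := Fin.nontrivial_iff_two_le.2 hd
  refine ⟨{⟨0, by omega⟩}, Finset.singleton_nonempty _, Finset.singleton_ne_univ _, ?_⟩
  rw [Finset.sum_singleton]

lemma degree_bggen (t : Fin (2 * d)) : (bggen d t).degree = 2 := by
  unfold bggen bgen ggen
  split_ifs <;> simp [Finsupp.degree_single]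

lemma deg_allOne : deg (bggen d) (allOne d) = d :=
  deg_eq_of_degree_eq two_ne_zero degree_bggen
    ⟨fun i => ⟨i, by omega⟩, by simp only [bggen_of_lt, allOne_eq_sum_bgen]⟩

end Example

end ASG

open ASG in
/-- For `d ≥ 2` with `d = 2` or `d` odd, consider the
submonoid `Λ ⊆ ℕ^(2d)` generated by the `β_i` and `γ_j`.  Then
`𝟙 = β_1 + ⋯ + β_d ∈ Λ` has `deg 𝟙 = d`, the open interval `(0,𝟙)` is
nonempty and is the disjoint union `A ⊔ B` with no element of `A` comparable
to any element of `B`; consequently `H̃_0(Δ(0,𝟙); K) ≠ 0` for every field `K`. -/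
theorem disconnected_interval_example
    (d : ℕ) (hd : 2 ≤ d) (hdo : d = 2 ∨ Odd d) :
    allOne d = ∑ i : Fin d, bgen d i ∧
    allOne d ∈ sg (bggen d) ∧
    deg (bggen d) (allOne d) = d ∧
    {μ : M (2 * d) | μ ∈ sg (bggen d) ∧ sgLT (bggen d) 0 μ ∧ sgLT (bggen d) μ (allOne d)}
      = setA d ∪ setB d ∧
    setA d ∩ setB d = ∅ ∧
    (setA d ∪ setB d).Nonempty ∧
    (∀ a ∈ setA d, ∀ b ∈ setB d,
      ¬ sgLE (bggen d) a b ∧ ¬ sgLE (bggen d) b a) ∧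
    (∀ (K : Type) [Field K], ¬ HredVanishes K (bggen d) 0 (allOne d) 0) := by
  have hinc : ∀ a ∈ setA d, ∀ b ∈ setB d, ¬ cmp2 (bggen d) a b := fun a ha b hb =>
    not_or.2 (setA_setB_incomparable hdo a ha b hb)
  refine ⟨allOne_eq_sum_bgen, allOne_eq_sum_bgen ▸ sum_mem fun i _ => bgen_mem i, deg_allOne,
    openInterval_eq hdo, setA_inter_setB hdo, ⟨_, Or.inl (bgen_zero_mem_setA hd)⟩,
    setA_setB_incomparable hdo, fun K _ => ?_⟩
  exact not_hredVanishes_zero_of_separated (openInterval_eq hdo) hinc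
    (bgen_zero_mem_setA hd) (ggen_zero_mem_setB hd)
end
end
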